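/- Let 𝒜 be a unital commutative C*-algebra, let τ : 𝒜 → 𝒜 be a surjective map, and let A, B : H_𝒜 → H_𝒜 be injective, continuous, additive maps that are τ-quasi-modular, i.e. A(λx) = τ(λ)·A(x) and B(λx) = τ(λ)·B(x) for all λ ∈ 𝒜 and x ∈ H_𝒜. Suppose there is a family {x_i}_{i∈ℕ} with x₁ coordinately invertible such that {A x_i} is an orthogonal basis of the submodule A(H_𝒜) (⟨A x_i, A x_j⟩ = 0 for i ≠ j, each A x_i ≠ 0, and every element of A(H_𝒜) is a convergent 𝒜-linear combination of the A x_i) containing at least two elements. If for every x ∈ H_𝒜 there exists λ_x ∈ 𝒜 with B x = λ_x·A x, then there exists a single λ ∈ 𝒜 such that B x = λ·A x for all x ∈ H_𝒜. -/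

import Mathlib

/-- An axiomatization of the standard Hilbert C*-module `H_𝒜 = ℓ²(ℕ, 𝒜)` over a unital
C*-algebra `𝒜`: a left `𝒜`-module with an `𝒜`-valued inner product, `𝒜`-linear in the
first variable and conjugate `𝒜`-linear in the second, complete in the norm
`‖v‖ = ‖⟨v,v⟩‖^{1/2}`, together with a standard orthonormal basis `e : ℕ → M` whose
`𝒜`-linear span is dense. -/
structure StdHilbertModule (A : Type*) [CStarAlgebra A]
    (M : Type*) [NormedAddCommGroup M] [Module A M] where
  inner : M → M → A
  inner_add_left : ∀ x y z : M, inner (x + y) z = inner x z + inner y z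
  inner_add_right : ∀ x y z : M, inner x (y + z) = inner x y + inner x z
  inner_smul_left : ∀ (a : A) (x y : M), inner (a • x) y = a * inner x y
  inner_smul_right : ∀ (a : A) (x y : M), inner x (a • y) = inner x y * star a
  star_inner : ∀ x y : M, star (inner x y) = inner y x
  inner_self_nonneg : ∀ x : M, ∃ a : A, inner x x = star a * a
  norm_eq : ∀ x : M, ‖x‖ = Real.sqrt ‖inner x x‖
  complete : CompleteSpace M
  e : ℕ → M
  inner_e : ∀ i j : ℕ, inner (e i) (e j) = if i = j then 1 else 0
  dense_span : Dense ((Submodule.span A (Set.range e) : Submodule A M) : Set M)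

namespace StdHilbertModule

variable {A : Type*} [CStarAlgebra A] {M : Type*} [NormedAddCommGroup M] [Module A M]
  (S : StdHilbertModule A M)

/-- `x` is coordinately invertible: `x ≠ 0` and each `⟨e i, x⟩` is invertible or zero. -/
def CI (x : M) : Prop :=
  x ≠ 0 ∧ ∀ i : ℕ, IsUnit (S.inner (S.e i) x) ∨ S.inner (S.e i) x = 0

/-- The "rank one" operator `θ_{x,y} : ξ ↦ ⟨ξ,y⟩ • x`. -/
def theta (x y : M) : M → M := fun ξ => S.inner ξ y • x

/-- `𝓕(H_𝒜)`: all finite sums `Σ αᵢ θ_{xᵢ,yᵢ}`. -/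
def FinRank : Set (M → M) :=
  {T | ∃ (n : ℕ) (α : Fin n → A) (x y : Fin n → M),
    T = ∑ i : Fin n, α i • S.theta (x i) (y i)}

/-- `L_x = {θ_{x,g} : g ∈ H_𝒜}`. -/
def Lset (x : M) : Set (M → M) := {T | ∃ g : M, T = S.theta x g}

/-- `R_f = {θ_{z,f} : z ∈ H_𝒜}`. -/
def Rset (f : M) : Set (M → M) := {T | ∃ z : M, T = S.theta z f}

/-- `L_x^{CI} = {θ_{x,g} : g ∈ CI}`. -/
def LCI (x : M) : Set (M → M) := {T | ∃ g : M, S.CI g ∧ T = S.theta x g}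

/-- `R_f^{CI} = {θ_{z,f} : z ∈ CI}`. -/
def RCI (f : M) : Set (M → M) := {T | ∃ z : M, S.CI z ∧ T = S.theta z f}

/-- `Φ` is rank-one preserving. -/
def RankOnePreserving (Φ : (M → M) → (M → M)) : Prop :=
  ∀ x y : M, S.CI y → ∃ s t : M, S.CI t ∧ Φ (S.theta x y) = S.theta s t ∧ (x ≠ 0 → s ≠ 0)

/-- `Φ` maps `𝓕(H_𝒜)` into `𝓕(H_𝒜)`. -/
def MapsFinRank (Φ : (M → M) → (M → M)) : Prop :=
  ∀ T ∈ S.FinRank, Φ T ∈ S.FinRank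

/-- `Φ` is additive on `𝓕(H_𝒜)`. -/
def AdditiveOn (Φ : (M → M) → (M → M)) : Prop :=
  ∀ T U : M → M, T ∈ S.FinRank → U ∈ S.FinRank → Φ (T + U) = Φ T + Φ U

/-- `Dim_𝒜 Φ(L_x^{CI}) ≥ 2`. -/
def DimGe2 (Φ : (M → M) → (M → M)) (x : M) : Prop :=
  ∃ f₁ f₂ y₁ y₂ g₁ g₂ : M, S.CI f₁ ∧ S.CI f₂ ∧ S.CI g₁ ∧ S.CI g₂ ∧
    Φ (S.theta x f₁) = S.theta y₁ g₁ ∧ Φ (S.theta x f₂) = S.theta y₂ g₂ ∧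
    ∀ α : A, g₁ ≠ α • g₂

end StdHilbertModule

/-!
Write `B u = λ_u • A u`. Since `τ` is onto, one can subtract from `v` a multiple of `x j` that
kills the `A (x j)`-coefficient of `A v`; computing `B` of the result in two ways gives
`λ_v ⟨A v, A x_j⟩ = λ_{x_j} ⟨A v, A x_j⟩`. Applied to `u = Σ x_i / n_i` (integers `n_i` large
enough for convergence; continuous additive maps commute with such series), whose image has the
invertible coefficients `1 / n_i`, this gives `λ_u ⟨A x_j, A x_j⟩ = λ_{x_j} ⟨A x_j, A x_j⟩`.
Hence `B v` and `λ_u • A v` have the same inner product with every `A x_j`, and they agree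
because `A v` lies in the closed span of the `A x_j`.
-/

theorem AddMonoidHom.map_smul_of_natCast_mul_eq_one {R M N : Type*} [Semiring R]
    [AddCommMonoid M] [Module R M] [AddCommMonoid N] [Module R N] (f : M →+ N) {n : ℕ} {g : R}
    (h : (n : R) * g = 1) (v : M) : f (g • v) = g • f v := by
  have h' : g * n = 1 := Nat.cast_comm n g ▸ h
  calc f (g • v) = g • f ((n : R) • g • v) := by
        rw [map_natCast_smul f R R, smul_smul, h', one_smul]
    _ = g • f v := by rw [smul_smul, h, one_smul]

namespace StdHilbertModule

section CStarAlgebra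

variable {A : Type*} [CStarAlgebra A] {M : Type*} [NormedAddCommGroup M] [Module A M]
  (S : StdHilbertModule A M)

def innerLeft (y : M) : M →+ A :=
  AddMonoidHom.mk' (S.inner · y) (fun a b => S.inner_add_left a b y)

lemma eq_zero_of_inner_self_eq_zero {z : M} (h : S.inner z z = 0) : z = 0 := by
  rw [← norm_eq_zero, S.norm_eq z, h, norm_zero, Real.sqrt_zero]

lemma norm_inner_le (x y : M) : ‖S.inner x y‖ ≤ ‖x‖ * ‖y‖ := by
  -- Mathlib's `CStarModule` is conjugate-linear in the first variable, hence the swap.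
  let _ : PartialOrder A := CStarAlgebra.spectralOrder A
  have _ : StarOrderedRing A := CStarAlgebra.spectralOrderedRing A
  let _ : Module ℂ M := Module.compHom M (algebraMap ℂ A)
  let _ : CStarModule A M :=
    { inner := fun x y => S.inner y x
      inner_add_right := S.inner_add_left _ _ _
      inner_self_nonneg := by
        intro x
        obtain ⟨a, ha⟩ := S.inner_self_nonneg x
        exact ha ▸ star_mul_self_nonneg a
      inner_self := ⟨S.eq_zero_of_inner_self_eq_zero, fun h => h ▸ map_zero (S.innerLeft 0)⟩
      inner_op_smul_right := S.inner_smul_left _ _ _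
      inner_smul_right_complex := (S.inner_smul_left _ _ _).trans (Algebra.smul_def _ _).symm
      star_inner := fun x y => S.star_inner y x
      norm_eq_sqrt_norm_inner_self := S.norm_eq }
  exact mul_comm ‖x‖ ‖y‖ ▸ CStarModule.norm_inner_le M (A := A) (x := y) (y := x)

lemma continuous_inner_left (y : M) : Continuous (S.innerLeft y) :=
  AddMonoidHomClass.continuous_of_bound (S.innerLeft y) ‖y‖ fun z =>
    (S.norm_inner_le z y).trans_eq (mul_comm _ _)

include S in
lemma norm_smul_le (a : A) (z : M) : ‖a • z‖ ≤ ‖a‖ * ‖z‖ := by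
  rw [S.norm_eq, S.norm_eq z, S.inner_smul_left, S.inner_smul_right,
    ← Real.sqrt_mul_self (norm_nonneg a), ← Real.sqrt_mul (mul_self_nonneg _)]
  refine Real.sqrt_le_sqrt ((norm_mul_le _ _).trans ?_)
  calc ‖a‖ * ‖S.inner z z * star a‖ ≤ ‖a‖ * (‖S.inner z z‖ * ‖a‖) := by
        gcongr; exact (norm_mul_le _ _).trans_eq (by rw [norm_star])
    _ = ‖a‖ * ‖a‖ * ‖S.inner z z‖ := by ring

include S in
lemma exists_summable_inv_natCast_smul (x : ℕ → M) :
    ∃ n : ℕ → ℕ, (∀ i, n i ≠ 0) ∧ Summable fun i => algebraMap ℂ A (n i : ℂ)⁻¹ • x i := by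
  have := S.complete
  choose n hn using fun i => exists_nat_gt (2 ^ i * ‖x i‖)
  have hpos (i : ℕ) : (0 : ℝ) < n i := (by positivity : (0 : ℝ) ≤ 2 ^ i * ‖x i‖).trans_lt (hn i)
  refine ⟨n, fun i => by exact_mod_cast (hpos i).ne', ?_⟩
  refine .of_norm_bounded (summable_geometric_two.mul_left ‖(1 : A)‖) fun i => ?_
  calc ‖algebraMap ℂ A (n i : ℂ)⁻¹ • x i‖ ≤ ‖algebraMap ℂ A (n i : ℂ)⁻¹‖ * ‖x i‖ :=
        S.norm_smul_le _ _
    _ = ‖(1 : A)‖ * ((1 / 2) ^ i * (2 ^ i * ‖x i‖) / n i) := by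
        rw [norm_algebraMap, norm_inv, Complex.norm_natCast, ← mul_assoc, ← mul_pow]
        norm_num; ring
    _ ≤ ‖(1 : A)‖ * (1 / 2) ^ i := by
        gcongr
        rw [div_le_iff₀ (hpos i)]
        exact mul_le_mul_of_nonneg_left (hn i).le (by positivity)

include S in
lemma exists_isUnit_hasSum_map (x : ℕ → M) : ∃ (γ : ℕ → A) (u : M), (∀ i, IsUnit (γ i)) ∧
    ∀ φ : M →+ M, Continuous φ → HasSum (fun i => γ i • φ (x i)) (φ u) := by
  obtain ⟨n, hn, hsum⟩ := S.exists_summable_inv_natCast_smul x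
  have hn' (i : ℕ) : (n i : ℂ) ≠ 0 := Nat.cast_ne_zero.mpr (hn i)
  have hinv (i : ℕ) : (n i : A) * algebraMap ℂ A (n i : ℂ)⁻¹ = 1 := by
    rw [← map_natCast (algebraMap ℂ A), ← map_mul, mul_inv_cancel₀ (hn' i), map_one]
  refine ⟨fun i => algebraMap ℂ A (n i : ℂ)⁻¹, ∑' i, algebraMap ℂ A (n i : ℂ)⁻¹ • x i,
    fun i => (IsUnit.mk0 _ (inv_ne_zero (hn' i))).map (algebraMap ℂ A),
    fun φ hφ => ?_⟩
  simpa only [Function.comp_def, φ.map_smul_of_natCast_mul_eq_one (hinv _)] using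
    hsum.hasSum.map φ hφ

variable {ι : Type*} {y : ι → M} {c : ι → A} {z : M}

lemma inner_eq_mul_of_hasSum (horth : Pairwise fun i j => S.inner (y i) (y j) = 0)
    (hz : HasSum (fun i => c i • y i) z) (j : ι) : S.inner z (y j) = c j * S.inner (y j) (y j) := by
  rw [← S.inner_smul_left]
  refine (hz.map (S.innerLeft (y j)) (S.continuous_inner_left (y j))).unique
    (hasSum_single j fun i hij => ?_)
  exact (S.inner_smul_left _ _ _).trans (by rw [horth hij, mul_zero])

lemma inner_eq_zero_of_hasSum (hz : HasSum (fun i => c i • y i) z) {w : M}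
    (hw : ∀ i, S.inner w (y i) = 0) : S.inner z w = 0 := by
  refine (hz.map (S.innerLeft w) (S.continuous_inner_left w)).unique ?_
  convert hasSum_zero with i
  exact (S.inner_smul_left _ _ _).trans (by rw [← S.star_inner, hw, star_zero, mul_zero])

lemma smul_eq_smul_of_hasSum (hz : HasSum (fun i => c i • y i) z) {μ ν : A}
    (h : ∀ i, μ * S.inner z (y i) = ν * S.inner z (y i)) : μ • z = ν • z := by
  rw [← sub_eq_zero, ← sub_smul]
  have hw (i : ι) : S.inner ((μ - ν) • z) (y i) = 0 := by
    rw [S.inner_smul_left, sub_mul, h i, sub_self]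
  apply S.eq_zero_of_inner_self_eq_zero
  rw [S.inner_smul_left _ z, S.inner_eq_zero_of_hasSum hz hw, mul_zero]

end CStarAlgebra

lemma mul_inner_eq_of_quasiModular {A : Type*} [CommCStarAlgebra A] {M : Type*}
    [NormedAddCommGroup M] [Module A M] (S : StdHilbertModule A M) {τ : A → A}
    (hτ : Function.Surjective τ) {φ ψ : M →+ M} (hφ : ∀ (a : A) (u : M), φ (a • u) = τ a • φ u)
    (hψ : ∀ (a : A) (u : M), ψ (a • u) = τ a • ψ u) {lam : M → A}
    (hlam : ∀ u, ψ u = lam u • φ u) {v y : M} {c : A}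
    (hc : S.inner (φ v) (φ y) = c * S.inner (φ y) (φ y)) :
    lam v * S.inner (φ v) (φ y) = lam y * S.inner (φ v) (φ y) := by
  obtain ⟨α, hα⟩ := hτ (-c)
  have hφ0 : S.inner (φ (v + α • y)) (φ y) = 0 := by
    rw [map_add, hφ, hα, S.inner_add_left, S.inner_smul_left, hc, neg_mul, add_neg_cancel]
  have hψ0 : S.inner (ψ (v + α • y)) (φ y) = 0 := by
    rw [hlam, S.inner_smul_left, hφ0, mul_zero]
  rw [map_add, hψ, hα, hlam v, hlam y, S.inner_add_left, S.inner_smul_left, S.inner_smul_left,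
    S.inner_smul_left] at hψ0
  linear_combination hψ0 - lam y * hc

end StdHilbertModule

open StdHilbertModule in
theorem quasi_modular_proportional_general {A : Type*} [CommCStarAlgebra A] {M : Type*}
    [NormedAddCommGroup M] [Module A M] (S : StdHilbertModule A M)
    (τ : A → A) (hτ : Function.Surjective τ)
    (Amap Bmap : M → M)
    (hAcont : Continuous Amap)
    (hAadd : ∀ u v : M, Amap (u + v) = Amap u + Amap v)
    (hBadd : ∀ u v : M, Bmap (u + v) = Bmap u + Bmap v)
    (hAqm : ∀ (lam : A) (u : M), Amap (lam • u) = τ lam • Amap u)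
    (hBqm : ∀ (lam : A) (u : M), Bmap (lam • u) = τ lam • Bmap u)
    (x : ℕ → M)
    (horth : ∀ i j : ℕ, i ≠ j → S.inner (Amap (x i)) (Amap (x j)) = 0)
    (hbasis : ∀ z ∈ Set.range Amap, ∃ c : ℕ → A, HasSum (fun i => c i • Amap (x i)) z)
    (hprop : ∀ u : M, ∃ lam : A, Bmap u = lam • Amap u) :
    ∃ lam : A, ∀ u : M, Bmap u = lam • Amap u := by
  choose lam hlam using hprop
  let φ : M →+ M := AddMonoidHom.mk' Amap hAadd
  let ψ : M →+ M := AddMonoidHom.mk' Bmap hBadd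
  have hAorth : Pairwise fun i j => S.inner (φ (x i)) (φ (x j)) = 0 := horth
  have hkey {v : M} {j : ℕ} {c : A}
      (hc : S.inner (φ v) (φ (x j)) = c * S.inner (φ (x j)) (φ (x j))) :=
    S.mul_inner_eq_of_quasiModular (φ := φ) (ψ := ψ) hτ hAqm hBqm hlam hc
  obtain ⟨γ, u, hγ, hu⟩ := S.exists_isUnit_hasSum_map x
  have hlam_u (j : ℕ) :
      lam u * S.inner (φ (x j)) (φ (x j)) = lam (x j) * S.inner (φ (x j)) (φ (x j)) := by
    have hc := S.inner_eq_mul_of_hasSum hAorth (hu φ hAcont) j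
    have h := hkey hc
    rw [hc, mul_left_comm, mul_left_comm (lam (x j))] at h
    exact (hγ j).mul_left_cancel h
  refine ⟨lam u, fun v => ?_⟩
  obtain ⟨c, hc⟩ : ∃ c : ℕ → A, HasSum (fun i => c i • φ (x i)) (φ v) := hbasis _ ⟨v, rfl⟩
  rw [hlam v]
  refine S.smul_eq_smul_of_hasSum hc fun j => ?_
  have hcj := S.inner_eq_mul_of_hasSum hAorth hc j
  rw [hkey hcj, hcj, mul_left_comm, ← hlam_u j, mul_left_comm]

open StdHilbertModule in
/-- Lemma 9: over a unital commutative C*-algebra, if `A, B` are injective continuous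
additive `τ`-quasi-modular maps with `τ` surjective, `{A xᵢ}` is an orthogonal basis of
`A(H_𝒜)` (with `x 0 ∈ CI`), and `B u` is always a multiple `λ_u • A u`, then `B = λ • A`
for a single `λ ∈ 𝒜`. -/
theorem quasi_modular_proportional {A : Type*} [CommCStarAlgebra A] {M : Type*}
    [NormedAddCommGroup M] [Module A M] (S : StdHilbertModule A M)
    (τ : A → A) (hτ : Function.Surjective τ)
    (Amap Bmap : M → M)
    (hAinj : Function.Injective Amap) (hBinj : Function.Injective Bmap)
    (hAcont : Continuous Amap) (hBcont : Continuous Bmap)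
    (hAadd : ∀ u v : M, Amap (u + v) = Amap u + Amap v)
    (hBadd : ∀ u v : M, Bmap (u + v) = Bmap u + Bmap v)
    (hAqm : ∀ (lam : A) (u : M), Amap (lam • u) = τ lam • Amap u)
    (hBqm : ∀ (lam : A) (u : M), Bmap (lam • u) = τ lam • Bmap u)
    (x : ℕ → M) (hx₀ : S.CI (x 0))
    (horth : ∀ i j : ℕ, i ≠ j → S.inner (Amap (x i)) (Amap (x j)) = 0)
    (hnz : ∀ i : ℕ, Amap (x i) ≠ 0)
    (hbasis : ∀ z ∈ Set.range Amap, ∃ c : ℕ → A, HasSum (fun i => c i • Amap (x i)) z)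
    (hprop : ∀ u : M, ∃ lam : A, Bmap u = lam • Amap u) :
    ∃ lam : A, ∀ u : M, Bmap u = lam • Amap u :=
  quasi_modular_proportional_general S τ hτ Amap Bmap hAcont hAadd hBadd hAqm hBqm x horth hbasis
    hprop
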